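/- Let Com be a communication model with synch ⊆ Com. If a global type G is deadlock-free realisable in Com, then G is deadlock-free realisable in synch. -/

import Mathlib

/-! ## Common definitions: actions, executions, MSCs, communication models,
communicating finite state machines, and global types. -/

/-- Actions: a send `p▷q!m` or a receive `p▷q?m`. -/
inductive Act (P M : Type) : Type where
  | snd (p q : P) (m : M)
  | rcv (p q : P) (m : M)
deriving DecidableEq

namespace Act
variable {P M : Type}

/-- The process executing an action: a send belongs to the sender,
a receive belongs to the receiver. -/
def proc : Act P M → P
  | .snd p _ _ => p
  | .rcv _ q _ => q

end Act

/-- Raw executions: a word of actions together with a source function on positions. -/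
structure Exec (P M : Type) : Type where
  w : List (Act P M)
  src : ℕ → ℕ

namespace Exec
variable {P M : Type}

def act? (e : Exec P M) (i : ℕ) : Option (Act P M) := e.w[i]?

def IsSend (e : Exec P M) (i : ℕ) : Prop := ∃ p q m, e.act? i = some (.snd p q m)

def IsRecv (e : Exec P M) (i : ℕ) : Prop := ∃ p q m, e.act? i = some (.rcv p q m)

/-- Well-formedness of an execution: each receive event `r` labelled `p▷q?m` has a
source send event `src r < r` labelled `p▷q!m`, and `src` is injective on receive events. -/
def WF (e : Exec P M) : Prop :=
  (∀ i p q m, e.act? i = some (.rcv p q m) →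
    e.src i < i ∧ e.act? (e.src i) = some (.snd p q m)) ∧
  (∀ i j, e.IsRecv i → e.IsRecv j → e.src i = e.src j → i = j)

/-- A send event is matched if it is the source of some receive event. -/
def Matched (e : Exec P M) (s : ℕ) : Prop := ∃ r, e.IsRecv r ∧ e.src r = s

def OrphanFree (e : Exec P M) : Prop := ∀ s, e.IsSend s → e.Matched s

/-- Prefix of executions: the word is a prefix and the source functions agree
on the receive events of the shorter one. -/
def IsPrefix (e₁ e₂ : Exec P M) : Prop :=
  e₁.w <+: e₂.w ∧ ∀ i, e₁.IsRecv i → e₁.src i = e₂.src i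

/-- Projection of an execution onto the actions of a process. -/
def proj (e : Exec P M) [DecidableEq P] (p : P) : List (Act P M) :=
  e.w.filter (fun a => decide (a.proc = p))

/-- The MSC event `(process, index within the process)` at a position of the word. -/
def evOf (e : Exec P M) [DecidableEq P] (i : ℕ) : Option (P × ℕ) :=
  (e.act? i).map
    (fun a => (a.proc, ((e.w.take i).filter (fun b => decide (b.proc = a.proc))).length))

/-- The position in the word of the `i`-th event of process `p`. -/
def posOf (e : Exec P M) [DecidableEq P] (ev : P × ℕ) : ℕ :=
  ((List.range e.w.length).filter
    (fun k => decide ((e.act? k).map Act.proc = some ev.1))).getD ev.2 0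

end Exec

/-- Raw MSCs: a word of actions per process, and a source function on events. -/
structure MSC (P M : Type) : Type where
  w : P → List (Act P M)
  src : P × ℕ → P × ℕ

namespace MSC
variable {P M : Type}

def act? (Mm : MSC P M) (ev : P × ℕ) : Option (Act P M) := (Mm.w ev.1)[ev.2]?

def IsSend (Mm : MSC P M) (ev : P × ℕ) : Prop := ∃ p q m, Mm.act? ev = some (.snd p q m)

def IsRecv (Mm : MSC P M) (ev : P × ℕ) : Prop := ∃ p q m, Mm.act? ev = some (.rcv p q m)

/-- Well-formedness of an MSC. -/
def WF (Mm : MSC P M) : Prop :=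
  (∀ p, ∀ a ∈ Mm.w p, a.proc = p) ∧
  (∀ ev p q m, Mm.act? ev = some (.rcv p q m) → Mm.act? (Mm.src ev) = some (.snd p q m)) ∧
  (∀ ev ev', Mm.IsRecv ev → Mm.IsRecv ev' → Mm.src ev = Mm.src ev' → ev = ev')

/-- Basic happens-before steps: process order and message order. -/
inductive hbBase (Mm : MSC P M) : P × ℕ → P × ℕ → Prop where
  | proc (p : P) (i j : ℕ) : i < j → j < (Mm.w p).length → hbBase Mm (p, i) (p, j)
  | msg (ev : P × ℕ) : Mm.IsRecv ev → hbBase Mm (Mm.src ev) ev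

/-- The happens-before relation: least transitive relation containing the basic steps. -/
def hb (Mm : MSC P M) : P × ℕ → P × ℕ → Prop := Relation.TransGen (hbBase Mm)

/-- Prefix of MSCs. -/
def IsPrefix (M₁ M₂ : MSC P M) : Prop :=
  (∀ p, M₁.w p <+: M₂.w p) ∧ ∀ ev, M₁.IsRecv ev → M₁.src ev = M₂.src ev

end MSC

/-- Prefix closure of a set of MSCs. -/
def prefSet {P M : Type} (X : Set (MSC P M)) : Set (MSC P M) :=
  {Mm | ∃ M' ∈ X, Mm.IsPrefix M'}

/-- The MSC of an execution: project onto each process and lift the source function. -/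
def Exec.toMSC {P M : Type} [DecidableEq P] (e : Exec P M) : MSC P M where
  w p := e.w.filter (fun a => decide (a.proc = p))
  src ev := (e.evOf (e.src (e.posOf ev))).getD ev

/-- The linearisations of an MSC, identified with the executions they induce. -/
def lin {P M : Type} [DecidableEq P] (Mm : MSC P M) : Set (Exec P M) :=
  {e | e.WF ∧ e.toMSC = Mm}

/-- The linearisations of an MSC lying in a communication model. -/
def linC {P M : Type} [DecidableEq P] (Com : Set (Exec P M)) (Mm : MSC P M) :
    Set (Exec P M) :=
  lin Mm ∩ Com

/-- A communication model (a set of executions) is causally closed if whenever an MSC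
has a linearisation in the model, all its linearisations are in the model. -/
def CausallyClosed {P M : Type} [DecidableEq P] (Com : Set (Exec P M)) : Prop :=
  ∀ Mm : MSC P M, (linC Com Mm).Nonempty → linC Com Mm = lin Mm

/-- The MSCs linearisable in a communication model. -/
def MSCModel {P M : Type} [DecidableEq P] (Com : Set (Exec P M)) : Set (MSC P M) :=
  {Mm | (linC Com Mm).Nonempty}

/-- The bag communication model: all executions. -/
def bag {P M : Type} : Set (Exec P M) := {e | e.WF}

/-- The synchronous communication model: every send is immediately followed by
its matching receive. -/
def synch {P M : Type} : Set (Exec P M) :=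
  {e | e.WF ∧ ∀ s, e.IsSend s → e.IsRecv (s + 1) ∧ e.src (s + 1) = s}

/-- The peer-to-peer communication model. -/
def p2p {P M : Type} : Set (Exec P M) :=
  {e | e.WF ∧ ∀ s₁ s₂ p q m₁ m₂,
    e.act? s₁ = some (.snd p q m₁) → e.act? s₂ = some (.snd p q m₂) → s₁ < s₂ →
    (¬ e.Matched s₂ ∨
      ∃ r₁ r₂, r₁ < r₂ ∧ e.IsRecv r₁ ∧ e.IsRecv r₂ ∧ e.src r₁ = s₁ ∧ e.src r₂ = s₂)}

/-- Happens-before between positions of an execution, through its MSC. -/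
def Exec.hbM {P M : Type} [DecidableEq P] (e : Exec P M) (i j : ℕ) : Prop :=
  ∃ ev₁ ev₂, e.evOf i = some ev₁ ∧ e.evOf j = some ev₂ ∧ e.toMSC.hb ev₁ ev₂

/-- The causally ordered communication model. -/
def causal {P M : Type} [DecidableEq P] : Set (Exec P M) :=
  {e | e.WF ∧ ∀ s₁ s₂ p₁ p₂ q m₁ m₂,
    e.act? s₁ = some (.snd p₁ q m₁) → e.act? s₂ = some (.snd p₂ q m₂) → e.hbM s₁ s₂ →
    (¬ e.Matched s₂ ∨
      ∃ r₁ r₂, e.hbM r₁ r₂ ∧ e.IsRecv r₁ ∧ e.IsRecv r₂ ∧ e.src r₁ = s₁ ∧ e.src r₂ = s₂)}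

/-- A communicating finite state machine: an NFA with ε-transitions
(over the actions of a process) with finitely many states. -/
structure CFSM (A : Type) : Type 1 where
  State : Type
  fin : Fintype State
  aut : εNFA A State

instance {A : Type} (c : CFSM A) : Fintype c.State := c.fin

/-- The machine obtained by making all states accepting. -/
def CFSM.up {A : Type} (c : CFSM A) : CFSM A :=
  ⟨c.State, c.fin, { c.aut with accept := Set.univ }⟩

/-- Making all states of all machines of a system accepting. -/
def sysUp {P M : Type} (S : P → CFSM (Act P M)) : P → CFSM (Act P M) :=
  fun p => (S p).up

/-- `Exec(S, Com)`: the executions of a system of CFSMs in a communication model. -/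
def ExecSys {P M : Type} [DecidableEq P] (S : P → CFSM (Act P M)) (Com : Set (Exec P M)) :
    Set (Exec P M) :=
  {e | e ∈ Com ∧ ∀ p, e.proj p ∈ (S p).aut.accepts}

/-- `MSC(S, Com)`: the MSCs of the executions of a system of CFSMs. -/
def MSCSys {P M : Type} [DecidableEq P] (S : P → CFSM (Act P M)) (Com : Set (Exec P M)) :
    Set (MSC P M) :=
  Exec.toMSC '' ExecSys S Com

/-- A system is deadlock-free for `Com` if every execution of the system with all states
accepting is a prefix of an accepting execution of the system. -/
def DeadlockFree {P M : Type} [DecidableEq P] (S : P → CFSM (Act P M))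
    (Com : Set (Exec P M)) : Prop :=
  ∀ e ∈ ExecSys (sysUp S) Com, ∃ e' ∈ ExecSys S Com, e.IsPrefix e'

/-- A system is orphan-free for `Com` if all its executions are orphan-free. -/
def SysOrphanFree {P M : Type} [DecidableEq P] (S : P → CFSM (Act P M))
    (Com : Set (Exec P M)) : Prop :=
  ∀ e ∈ ExecSys S Com, e.OrphanFree

/-- An arrow `p→q:m` with `p ≠ q`. -/
def Arrow (P M : Type) : Type := {x : P × P × M // x.1 ≠ x.2.1}

namespace Arrow
variable {P M : Type}

def sender (a : Arrow P M) : P := a.1.1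
def receiver (a : Arrow P M) : P := a.1.2.1
def msg (a : Arrow P M) : M := a.1.2.2
def sendAct (a : Arrow P M) : Act P M := .snd a.sender a.receiver a.msg
def recvAct (a : Arrow P M) : Act P M := .rcv a.sender a.receiver a.msg

/-- Two arrows commute when their pairs of processes are disjoint. -/
def Commutes (a b : Arrow P M) : Prop :=
  a.sender ≠ b.sender ∧ a.sender ≠ b.receiver ∧
    a.receiver ≠ b.sender ∧ a.receiver ≠ b.receiver

instance [DecidableEq P] [Fintype P] [Fintype M] : Fintype (Arrow P M) :=
  Subtype.fintype _

end Arrow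

/-- A global type: a deterministic finite (possibly partial) automaton over arrows. -/
structure GType (P M : Type) : Type 1 where
  State : Type
  fin : Fintype State
  step : State → Arrow P M → Option State
  start : State
  accept : Set State

instance {P M : Type} (G : GType P M) : Fintype G.State := G.fin

namespace GType
variable {P M : Type}

def evalFrom (G : GType P M) (s : Option G.State) (w : List (Arrow P M)) : Option G.State :=
  w.foldl (fun s a => s.bind (fun q => G.step q a)) s

/-- The word language of a global type. -/
def lang (G : GType P M) : Set (List (Arrow P M)) :=
  {w | ∃ s, G.evalFrom (some G.start) w = some s ∧ s ∈ G.accept}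

/-- The arrows labelling the outgoing transitions of a state. -/
def choices (G : GType P M) (s : G.State) : Set (Arrow P M) := {a | (G.step s a).isSome}

/-- Commutation-determinism: no two arrows available at a same state commute. -/
def CommDet (G : GType P M) : Prop :=
  ∀ s : G.State, ∀ a ∈ G.choices s, ∀ b ∈ G.choices s, ¬ a.Commutes b

/-- Sender-driven choice: all arrows available at a same state have the same sender. -/
def SenderDriven (G : GType P M) : Prop :=
  ∀ s : G.State, ∀ a ∈ G.choices s, ∀ b ∈ G.choices s, a.sender = b.sender

end GType

/-- The synchronous execution coded by a sequence of arrows. -/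
def execOfArrows {P M : Type} (w : List (Arrow P M)) : Exec P M where
  w := (w.map (fun a => [a.sendAct, a.recvAct])).flatten
  src := fun i => i - 1

/-- The MSC coded by a sequence of arrows. -/
def mscOfArrows {P M : Type} [DecidableEq P] (w : List (Arrow P M)) : MSC P M :=
  (execOfArrows w).toMSC

/-- The set of MSCs of sequences of arrows (MSCs linearisable in the synchronous model). -/
def MSCsynch (P M : Type) [DecidableEq P] : Set (MSC P M) :=
  Set.range (mscOfArrows (P := P) (M := M))

/-- The existential MSC language of a global type. -/
def Lexists {P M : Type} [DecidableEq P] (G : GType P M) : Set (MSC P M) :=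
  mscOfArrows '' G.lang

/-- The universal MSC language of a global type. -/
def Lforall {P M : Type} [DecidableEq P] (G : GType P M) : Set (MSC P M) :=
  {Mm | (∃ w, mscOfArrows w = Mm) ∧ ∀ w, mscOfArrows w = Mm → w ∈ G.lang}

/-- A global type is commutation-closed when its existential and universal MSC
languages coincide. -/
def GType.CommClosed {P M : Type} [DecidableEq P] (G : GType P M) : Prop :=
  Lexists G = Lforall G

/-- The relabelling of an arrow for the projection onto process `p`. -/
def projLabel {P M : Type} [DecidableEq P] (p : P) (a : Arrow P M) : Option (Act P M) :=
  if a.sender = p then some a.sendAct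
  else if a.receiver = p then some a.recvAct
  else none

/-- The projected system of CFSMs of a global type. -/
def projG {P M : Type} [DecidableEq P] (G : GType P M) : P → CFSM (Act P M) :=
  fun p =>
    ⟨G.State, G.fin,
      { step := fun s oa =>
          {s' | ∃ arr : Arrow P M, G.step s arr = some s' ∧ projLabel p arr = oa},
        start := {G.start},
        accept := G.accept }⟩

/-- `Exec(G, Com)`: the semantics of a global type in a communication model. -/
def ExecG {P M : Type} [DecidableEq P] (G : GType P M) (Com : Set (Exec P M)) :
    Set (Exec P M) :=
  {e | ∃ Mm ∈ Lexists G, e ∈ linC Com Mm}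

/-- Deadlock-free realisability of a global type in a communication model:
(CC) conformance and (DF) deadlock freedom of the projected system. -/
def DFRealisable {P M : Type} [DecidableEq P] (G : GType P M) (Com : Set (Exec P M)) : Prop :=
  ExecSys (projG G) Com = ExecG G Com ∧ DeadlockFree (projG G) Com

/-- The synchronous product of a system of CFSMs: an ε-NFA over arrows. -/
def syncProd {P M : Type} (S : P → CFSM (Act P M)) :
    εNFA (Arrow P M) (∀ p, (S p).State) where
  step st oa :=
    match oa with
    | some a =>
        {st' | st' a.sender ∈ (S a.sender).aut.step (st a.sender) (some a.sendAct) ∧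
               st' a.receiver ∈ (S a.receiver).aut.step (st a.receiver) (some a.recvAct) ∧
               ∀ r, r ≠ a.sender → r ≠ a.receiver → st' r = st r}
    | none =>
        {st' | ∃ p, st' p ∈ (S p).aut.step (st p) none ∧ ∀ r, r ≠ p → st' r = st r}
  start := {st | ∀ p, st p ∈ (S p).aut.start}
  accept := {st | ∀ p, st p ∈ (S p).aut.accept}

/-- `prod(S)`: the powerset determinisation of the synchronous product, a global type. -/
noncomputable def prodG {P M : Type} [Fintype P] (S : P → CFSM (Act P M)) : GType P M :=
  let A := (syncProd S).toNFA.toDFA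
  { State := Set (∀ p, (S p).State)
    fin := by
      haveI : Finite (∀ p, (S p).State) := inferInstance
      exact Fintype.ofFinite _
    step := fun s a => some (A.step s a)
    start := A.start
    accept := A.accept }

/-- The product `G₁ ⊗ G₂` of two global types (language intersection). -/
def prodGT {P M : Type} (G₁ G₂ : GType P M) : GType P M where
  State := G₁.State × G₂.State
  fin := inferInstance
  step s a := (G₁.step s.1 a).bind fun q₁ => (G₂.step s.2 a).map fun q₂ => (q₁, q₂)
  start := (G₁.start, G₂.start)
  accept := {s | s.1 ∈ G₁.accept ∧ s.2 ∈ G₂.accept}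

/-- The dual of a global type: complete it and swap accepting and non-accepting states. -/
def dualG {P M : Type} (G : GType P M) : GType P M where
  State := Option G.State
  fin := inferInstance
  step s a := some (s.bind fun q => G.step q a)
  start := some G.start
  accept := {s | ∀ q, s = some q → q ∉ G.accept}

/-- RSC executions: every receive immediately follows its source send. -/
def RSCexec {P M : Type} : Set (Exec P M) :=
  {e | e.WF ∧ ∀ r, e.IsRecv r → e.src r = r - 1}

/-- The MSCs admitting an RSC linearisation. -/
def MSCrsc {P M : Type} [DecidableEq P] : Set (MSC P M) :=
  {Mm | ∃ e ∈ RSCexec (P := P) (M := M), e.toMSC = Mm}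

/-- A set of MSCs is RegSC if some NFA over actions accepts exactly the RSC executions
whose MSC belongs to the set. -/
def RegSCset {P M : Type} [DecidableEq P] (X : Set (MSC P M)) : Prop :=
  ∃ (σ : Type) (_ : Fintype σ) (A : NFA (Act P M) σ),
    ∀ w : List (Act P M),
      w ∈ A.accepts ↔ ∃ e ∈ RSCexec (P := P) (M := M), e.w = w ∧ e.toMSC ∈ X

/-- A communication model is RegSC if the set of its RSC-linearisable MSCs is RegSC. -/
def RegSCmodel {P M : Type} [DecidableEq P] (Com : Set (Exec P M)) : Prop :=
  RegSCset (MSCModel Com ∩ MSCrsc)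

/-! Conformance in `synch` is conformance in `Com` intersected with `synch`. For deadlock
freedom, a synchronous execution `e` of the projected system extends in `Com` to a complete
execution `e'` whose MSC is that of an arrow word `w ∈ L(G)`, so every process sees in `e` a
prefix of its projection of `w`. Since `e` is synchronous it is itself an arrow word `u`, and
an arrow word whose projections are prefixes of those of `w` can be completed to a word with
exactly the projections of `w`: the first arrow of `u` is also the first arrow of `w` touching
its two processes, so it commutes to the front of `w`. The synchronous execution of the
completed word is accepted by every machine, because each machine only sees its projection. -/

namespace Arrow

variable {P M : Type}

theorem sender_ne_receiver (a : Arrow P M) : a.sender ≠ a.receiver := a.2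

theorem ext {a b : Arrow P M} (hs : a.sender = b.sender) (hr : a.receiver = b.receiver)
    (hm : a.msg = b.msg) : a = b :=
  Subtype.ext (Prod.ext hs (Prod.ext hr hm))

theorem sendAct_injective : Function.Injective (sendAct : Arrow P M → Act P M) := by
  intro a b h
  simp only [sendAct, Act.snd.injEq] at h
  exact ext h.1 h.2.1 h.2.2

theorem recvAct_injective : Function.Injective (recvAct : Arrow P M → Act P M) := by
  intro a b h
  simp only [recvAct, Act.rcv.injEq] at h
  exact ext h.1 h.2.1 h.2.2

variable [DecidableEq P]

def proj (p : P) (a : Arrow P M) : List (Act P M) :=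
  [a.sendAct, a.recvAct].filter fun x => decide (x.proc = p)

theorem proj_sender (a : Arrow P M) : a.proj a.sender = [a.sendAct] := by
  simp [proj, sendAct, recvAct, Act.proc, (sender_ne_receiver a).symm]

theorem proj_receiver (a : Arrow P M) : a.proj a.receiver = [a.recvAct] := by
  simp [proj, sendAct, recvAct, Act.proc, sender_ne_receiver a]

theorem proj_of_ne {a : Arrow P M} {p : P} (hs : a.sender ≠ p) (hr : a.receiver ≠ p) :
    a.proj p = [] := by
  simp [proj, sendAct, recvAct, Act.proc, hs, hr]

theorem mem_proj {a : Arrow P M} {p : P} {x : Act P M} (hx : x ∈ a.proj p) :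
    x = a.sendAct ∨ x = a.recvAct := by
  simpa [proj] using (List.mem_filter.mp hx).1

theorem eq_of_sendAct_mem_proj {a b : Arrow P M} {p : P} (h : b.sendAct ∈ a.proj p) :
    b = a := by
  rcases mem_proj h with h | h
  · exact sendAct_injective h
  · simp [sendAct, recvAct] at h

theorem eq_of_recvAct_mem_proj {a b : Arrow P M} {p : P} (h : b.recvAct ∈ a.proj p) :
    b = a := by
  rcases mem_proj h with h | h
  · simp [sendAct, recvAct] at h
  · exact recvAct_injective h

end Arrow

section ArrowWords

variable {P M : Type} [DecidableEq P]

def projArrows (p : P) (w : List (Arrow P M)) : List (Act P M) :=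
  w.flatMap (Arrow.proj p)

theorem ne_of_snd_mem_projArrows {r p q : P} {m : M} {w : List (Arrow P M)}
    (h : Act.snd p q m ∈ projArrows r w) : p ≠ q := by
  obtain ⟨a, -, ha⟩ := List.mem_flatMap.mp h
  rcases Arrow.mem_proj ha with h | h
  · simp only [Arrow.sendAct, Act.snd.injEq] at h
    exact h.1 ▸ h.2.1 ▸ a.sender_ne_receiver
  · simp [Arrow.recvAct] at h

theorem exists_eq_append_cons_of_head? {a : Arrow P M} {w : List (Arrow P M)}
    (hs : (projArrows a.sender w).head? = some a.sendAct)
    (hr : (projArrows a.receiver w).head? = some a.recvAct) :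
    ∃ w₁ w₂, w = w₁ ++ a :: w₂ ∧ ∀ c ∈ w₁, c.proj a.sender = [] ∧ c.proj a.receiver = [] := by
  induction w with
  | nil => simp [projArrows] at hs
  | cons c w ih =>
    simp only [projArrows, List.flatMap_cons, List.head?_append] at hs hr ih
    by_cases hc : c.proj a.sender = [] ∧ c.proj a.receiver = []
    · obtain ⟨w₁, w₂, rfl, hw₁⟩ := ih (by simpa [hc.1] using hs) (by simpa [hc.2] using hr)
      exact ⟨c :: w₁, w₂, rfl, by simpa [hc] using hw₁⟩
    · suffices a = c from ⟨[], w, by rw [this]; rfl, by simp⟩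
      rcases not_and_or.mp hc with hc | hc
      · obtain ⟨x, l, hx⟩ := List.ne_nil_iff_exists_cons.mp hc
        simp only [hx, List.head?_cons, Option.some_or, Option.some.injEq] at hs
        exact Arrow.eq_of_sendAct_mem_proj (hs ▸ hx ▸ List.mem_cons_self)
      · obtain ⟨x, l, hx⟩ := List.ne_nil_iff_exists_cons.mp hc
        simp only [hx, List.head?_cons, Option.some_or, Option.some.injEq] at hr
        exact Arrow.eq_of_recvAct_mem_proj (hr ▸ hx ▸ List.mem_cons_self)

theorem projArrows_append_cons {a : Arrow P M} {w₁ w₂ : List (Arrow P M)}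
    (hw₁ : ∀ c ∈ w₁, c.proj a.sender = [] ∧ c.proj a.receiver = []) (p : P) :
    projArrows p (w₁ ++ a :: w₂) = a.proj p ++ projArrows p (w₁ ++ w₂) := by
  have h : a.proj p = [] ∨ projArrows p w₁ = [] := by
    by_cases hs : a.sender = p
    · exact .inr (List.flatMap_eq_nil_iff.mpr fun c hc => hs ▸ (hw₁ c hc).1)
    by_cases hr : a.receiver = p
    · exact .inr (List.flatMap_eq_nil_iff.mpr fun c hc => hr ▸ (hw₁ c hc).2)
    exact .inl (Arrow.proj_of_ne hs hr)
  simp only [projArrows] at h ⊢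
  rcases h with h | h <;> simp [h]

theorem exists_projArrows_append_eq {u w : List (Arrow P M)}
    (h : ∀ p, projArrows p u <+: projArrows p w) :
    ∃ v, ∀ p, projArrows p (u ++ v) = projArrows p w := by
  induction u generalizing w with
  | nil => exact ⟨w, fun p => rfl⟩
  | cons a u ih =>
    have head?_eq (p : P) (x : Act P M) (hx : a.proj p = [x]) :
        (projArrows p w).head? = some x := by
      obtain ⟨t, ht⟩ := h p
      rw [← ht, projArrows, List.flatMap_cons, hx]
      rfl
    obtain ⟨w₁, w₂, rfl, hw₁⟩ := exists_eq_append_cons_of_head?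
      (head?_eq _ _ a.proj_sender) (head?_eq _ _ a.proj_receiver)
    obtain ⟨v, hv⟩ := ih (w := w₁ ++ w₂) fun p => by
      have hp := h p
      rwa [projArrows_append_cons hw₁, projArrows, List.flatMap_cons,
        List.prefix_append_right_inj] at hp
    refine ⟨v, fun p => ?_⟩
    rw [projArrows_append_cons hw₁, List.cons_append, projArrows, List.flatMap_cons]
    exact congrArg _ (hv p)

end ArrowWords

section SynchronousExecutions

variable {P M : Type}

theorem execOfArrows_w_append (u v : List (Arrow P M)) :
    (execOfArrows (u ++ v)).w = (execOfArrows u).w ++ (execOfArrows v).w := by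
  simp [execOfArrows]

theorem proj_execOfArrows [DecidableEq P] (w : List (Arrow P M)) (p : P) :
    (execOfArrows w).proj p = projArrows p w := by
  simp only [Exec.proj, execOfArrows, projArrows, List.filter_flatten, List.map_map,
    List.flatMap]
  rfl

theorem act?_execOfArrows (w : List (Arrow P M)) (k : ℕ) :
    (execOfArrows w).act? (2 * k) = w[k]?.map Arrow.sendAct ∧
      (execOfArrows w).act? (2 * k + 1) = w[k]?.map Arrow.recvAct := by
  induction w generalizing k with
  | nil => simp [execOfArrows, Exec.act?]
  | cons a w ih =>
    cases k with
    | zero => simp [execOfArrows, Exec.act?]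
    | succ k => simpa [execOfArrows, Exec.act?, Nat.mul_succ] using ih k

theorem exists_of_act?_execOfArrows {w : List (Arrow P M)} {i : ℕ} {x : Act P M}
    (h : (execOfArrows w).act? i = some x) :
    ∃ k a, w[k]? = some a ∧ (i = 2 * k ∧ x = a.sendAct ∨ i = 2 * k + 1 ∧ x = a.recvAct) := by
  obtain ⟨k, rfl | rfl⟩ := Nat.even_or_odd' i
  · obtain ⟨a, ha, rfl⟩ := Option.map_eq_some_iff.mp ((act?_execOfArrows w k).1 ▸ h)
    exact ⟨k, a, ha, .inl ⟨rfl, rfl⟩⟩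
  · obtain ⟨a, ha, rfl⟩ := Option.map_eq_some_iff.mp ((act?_execOfArrows w k).2 ▸ h)
    exact ⟨k, a, ha, .inr ⟨rfl, rfl⟩⟩

theorem execOfArrows_mem_synch (w : List (Arrow P M)) : execOfArrows w ∈ synch := by
  have recv_pos {i p q m} (h : (execOfArrows w).act? i = some (.rcv p q m)) :
      ∃ k a, w[k]? = some a ∧ i = 2 * k + 1 ∧ Act.rcv p q m = a.recvAct := by
    obtain ⟨k, a, ha, ⟨-, hx⟩ | hi⟩ := exists_of_act?_execOfArrows h
    · simp [Arrow.sendAct] at hx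
    · exact ⟨k, a, ha, hi⟩
  refine ⟨⟨fun i p q m h => ?_, fun i j ⟨_, _, _, hi⟩ ⟨_, _, _, hj⟩ hij => ?_⟩, ?_⟩
  · obtain ⟨k, a, ha, rfl, hx⟩ := recv_pos h
    have hsrc : (execOfArrows w).src (2 * k + 1) = 2 * k := rfl
    simp only [Arrow.recvAct, Act.rcv.injEq] at hx
    rw [hsrc, (act?_execOfArrows w k).1, ha]
    simp [Arrow.sendAct, hx]
  · obtain ⟨k, -, -, rfl, -⟩ := recv_pos hi
    obtain ⟨l, -, -, rfl, -⟩ := recv_pos hj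
    simp only [execOfArrows] at hij
    omega
  · rintro s ⟨p, q, m, hs⟩
    obtain ⟨k, a, ha, ⟨rfl, -⟩ | ⟨-, hx⟩⟩ := exists_of_act?_execOfArrows hs
    · exact ⟨⟨a.sender, a.receiver, a.msg, by simp [(act?_execOfArrows w k).2, ha]; rfl⟩, rfl⟩
    · simp [Arrow.recvAct] at hx

theorem src_add_one_eq_of_mem_synch {e : Exec P M} (he : e ∈ synch) {r : ℕ} {p q : P}
    {m : M} (h : e.act? r = some (.rcv p q m)) : e.src r + 1 = r := by
  obtain ⟨-, hsnd⟩ := he.1.1 r p q m h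
  obtain ⟨hrecv, hsrc⟩ := he.2 (e.src r) ⟨p, q, m, hsnd⟩
  exact (he.1.2 r _ ⟨p, q, m, h⟩ hrecv hsrc.symm).symm

theorem exists_take_eq_execOfArrows {e : Exec P M} (he : e ∈ synch)
    (hne : ∀ i p q m, e.act? i = some (.snd p q m) → p ≠ q) :
    ∀ n ≤ e.w.length, ¬ e.IsRecv n → ∃ u, e.w.take n = (execOfArrows u).w := by
  intro n
  induction n using Nat.strong_induction_on with
  | _ n ih =>
    intro hn hnr
    rcases n with _ | n
    · exact ⟨[], by simp [execOfArrows]⟩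
    obtain ⟨x, hx⟩ : ∃ x, e.act? n = some x :=
      Option.isSome_iff_exists.mp (by simp [Exec.act?]; omega)
    cases x with
    | snd p q m => exact absurd (he.2 n ⟨p, q, m, hx⟩).1 hnr
    | rcv p q m =>
      obtain ⟨k, rfl⟩ : ∃ k, n = k + 1 := ⟨e.src n, (src_add_one_eq_of_mem_synch he hx).symm⟩
      have hsrc : e.src (k + 1) = k := Nat.add_right_cancel (src_add_one_eq_of_mem_synch he hx)
      have hsnd : e.act? k = some (.snd p q m) := hsrc ▸ (he.1.1 _ p q m hx).2
      obtain ⟨u, hu⟩ := ih k (by omega) (by omega) fun ⟨_, _, _, h⟩ => by simp [hsnd] at h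
      refine ⟨u ++ [⟨(p, q, m), hne k p q m hsnd⟩], ?_⟩
      rw [List.take_add_one, List.take_add_one, hu, execOfArrows_w_append]
      simp only [Exec.act?] at hsnd hx
      simp [hsnd, hx]
      rfl

end SynchronousExecutions

section Realisability

variable {P M : Type} [DecidableEq P]

theorem exists_isPrefix_execOfArrows {e : Exec P M} (he : e ∈ synch) {w : List (Arrow P M)}
    (hw : ∀ p, e.proj p <+: projArrows p w) :
    ∃ z, e.IsPrefix (execOfArrows z) ∧ ∀ p, projArrows p z = projArrows p w := by
  have hne (i : ℕ) (p q : P) (m : M) (hi : e.act? i = some (.snd p q m)) : p ≠ q := by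
    have hmem : Act.snd p q m ∈ e.proj p :=
      List.mem_filter.mpr ⟨List.mem_of_getElem? hi, by simp [Act.proc]⟩
    exact ne_of_snd_mem_projArrows ((hw p).subset hmem)
  obtain ⟨u, hu⟩ := exists_take_eq_execOfArrows he hne e.w.length le_rfl
    fun ⟨_, _, _, h⟩ => by simp [Exec.act?] at h
  rw [List.take_length] at hu
  have hproj (p : P) : e.proj p = projArrows p u := by
    rw [← proj_execOfArrows, Exec.proj, Exec.proj, hu]
  obtain ⟨v, hv⟩ := exists_projArrows_append_eq fun p => hproj p ▸ hw p
  refine ⟨u ++ v, ⟨?_, fun i ⟨p, q, m, hi⟩ => ?_⟩, hv⟩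
  · rw [hu, execOfArrows_w_append]
    exact List.prefix_append _ _
  · exact Nat.eq_sub_of_add_eq (src_add_one_eq_of_mem_synch he hi)

theorem ExecSys_inter (S : P → CFSM (Act P M)) (Com Com' : Set (Exec P M)) :
    ExecSys S (Com ∩ Com') = ExecSys S Com ∩ Com' := by
  ext e
  simp only [ExecSys, Set.mem_inter_iff, Set.mem_ofPred_eq]
  tauto

theorem ExecG_inter (G : GType P M) (Com Com' : Set (Exec P M)) :
    ExecG G (Com ∩ Com') = ExecG G Com ∩ Com' := by
  ext e
  simp only [ExecG, linC, Set.mem_inter_iff, Set.mem_ofPred_eq]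
  constructor
  · rintro ⟨Mm, hMm, hlin, he, he'⟩
    exact ⟨⟨Mm, hMm, hlin, he⟩, he'⟩
  · rintro ⟨⟨Mm, hMm, hlin, he⟩, he'⟩
    exact ⟨Mm, hMm, hlin, he, he'⟩

theorem exists_proj_eq_projArrows_of_mem_ExecG {G : GType P M} {Com : Set (Exec P M)}
    {e : Exec P M} (he : e ∈ ExecG G Com) : ∃ w, ∀ p, e.proj p = projArrows p w := by
  obtain ⟨_, ⟨w, -, rfl⟩, ⟨-, hmsc⟩, -⟩ := he
  exact ⟨w, fun p => (proj_execOfArrows w p) ▸ congrArg (fun Mm : MSC P M => Mm.w p) hmsc⟩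

theorem DeadlockFree.synch_of_subset {S : P → CFSM (Act P M)} {Com : Set (Exec P M)}
    (hsub : synch ⊆ Com) (hdf : DeadlockFree S Com)
    (hS : ∀ e ∈ ExecSys S Com, ∃ w, ∀ p, e.proj p = projArrows p w) :
    DeadlockFree S synch := by
  rintro e ⟨hes, hacc⟩
  obtain ⟨e', he', hpre⟩ := hdf e ⟨hsub hes, hacc⟩
  obtain ⟨w, hw⟩ := hS e' he'
  have hproj (p : P) : e.proj p <+: projArrows p w := hw p ▸ hpre.1.filter _
  obtain ⟨z, hez, hzw⟩ := exists_isPrefix_execOfArrows hes hproj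
  refine ⟨execOfArrows z, ⟨execOfArrows_mem_synch z, fun p => ?_⟩, hez⟩
  rw [proj_execOfArrows, hzw, ← hw]
  exact he'.2 p

end Realisability

theorem stmt15_general (P Mg : Type) [DecidableEq P]
    (Com : Set (Exec P Mg)) (hsub : (synch : Set (Exec P Mg)) ⊆ Com)
    (G : GType P Mg) (h : DFRealisable G Com) :
    DFRealisable G synch := by
  obtain ⟨hcc, hdf⟩ := h
  have hsynch : Com ∩ synch = synch := Set.inter_eq_right.mpr hsub
  refine ⟨?_, hdf.synch_of_subset hsub fun e he => ?_⟩
  · rw [← hsynch, ExecSys_inter, ExecG_inter, hcc]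
  · exact exists_proj_eq_projArrows_of_mem_ExecG (hcc ▸ he)

/-- if `synch ⊆ Com` and `G` is deadlock-free realisable in `Com`,
then `G` is deadlock-free realisable in `synch`. -/
theorem stmt15 (P Mg : Type) [Fintype P] [DecidableEq P] [Fintype Mg] [DecidableEq Mg]
    (Com : Set (Exec P Mg)) (hsub : (synch : Set (Exec P Mg)) ⊆ Com)
    (G : GType P Mg) (h : DFRealisable G Com) :
    DFRealisable G synch :=
  stmt15_general P Mg Com hsub G h
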